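/- Let p ∈ ℕ and π ∈ P_2(p). Let σ(π) be the partition of [p] whose blocks are the unions ∪_{V ∈ c} V taken over the connected components c of the intersection graph f_π. Then σ(π) is a noncrossing partition of [p], i.e. no two blocks of σ(π) cross. -/

import Mathlib

open MeasureTheory Filter Topology
open scoped Classical

namespace EpsCLT

/-- Two subsets of `Fin p` (typically blocks of a partition) *cross* if there exist
`i < k < j < l` with `i, j` in one of them and `k, l` in the other. -/
def Crosses {p : ℕ} (B₁ B₂ : Finset (Fin p)) : Prop :=
  ∃ i k j l : Fin p, i < k ∧ k < j ∧ j < l ∧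
    ((i ∈ B₁ ∧ j ∈ B₁ ∧ k ∈ B₂ ∧ l ∈ B₂) ∨ (i ∈ B₂ ∧ j ∈ B₂ ∧ k ∈ B₁ ∧ l ∈ B₁))

theorem Crosses.symm {p : ℕ} {B₁ B₂ : Finset (Fin p)} (h : Crosses B₁ B₂) : Crosses B₂ B₁ := by
  obtain ⟨i, k, j, l, h1, h2, h3, h4⟩ := h
  exact ⟨i, k, j, l, h1, h2, h3, h4.symm⟩

/-- `P` is a pair partition of `Fin p`: every block has two elements and every point lies in
exactly one block. -/
def IsPairPartition {p : ℕ} (P : Finset (Finset (Fin p))) : Prop :=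
  (∀ B ∈ P, B.card = 2) ∧ ∀ i : Fin p, ∃! B, B ∈ P ∧ i ∈ B

/-- `P` is a partition of `Fin p`: blocks are nonempty and every point lies in exactly one. -/
def IsPartition {p : ℕ} (P : Finset (Finset (Fin p))) : Prop :=
  (∀ B ∈ P, B.Nonempty) ∧ ∀ i : Fin p, ∃! B, B ∈ P ∧ i ∈ B

/-- A partition is noncrossing if no two (distinct) blocks cross. -/
def IsNoncrossing {p : ℕ} (P : Finset (Finset (Fin p))) : Prop :=
  ∀ B₁ ∈ P, ∀ B₂ ∈ P, B₁ ≠ B₂ → ¬ Crosses B₁ B₂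

/-- The intersection graph `f_π` of a partition: vertices are the blocks, with an edge between
two blocks iff they cross. -/
def interGraph {p : ℕ} (P : Finset (Finset (Fin p))) : SimpleGraph {B // B ∈ P} where
  Adj B₁ B₂ := B₁ ≠ B₂ ∧ Crosses B₁.1 B₂.1
  symm := ⟨fun _ _ h => ⟨Ne.symm h.1, h.2.symm⟩⟩
  loopless := ⟨fun _ h => h.1 rfl⟩

/-- Product over the edges of a graph (each edge counted once) of a symmetric function of the
endpoints.  The function is symmetrized, so for symmetric `F` each factor is `F u v`. -/
noncomputable def edgeProd {V : Type*} [Fintype V] (f : SimpleGraph V) (F : V → V → ℝ) : ℝ :=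
  ∏ e ∈ f.edgeFinset, Sym2.lift ⟨fun u v => (F u v + F v u) / 2, fun u v => by ring⟩ e

/-- Homomorphism density `ρ(f, w)` of a finite simple graph in a graphon `w`. -/
noncomputable def density {V : Type*} [Fintype V] (f : SimpleGraph V) (w : ℝ → ℝ → ℝ) : ℝ :=
  ∫ x in Set.univ.pi (fun _ : V => Set.Icc (0:ℝ) 1), edgeProd f (fun u v => w (x u) (x v))

/-- The step function of an `n × n` matrix: on the box `[(i-1)/n, i/n) × [(j-1)/n, j/n)`
(0-indexed: `[i/n, (i+1)/n) × [j/n, (j+1)/n)`) it takes the value `Q i j`. -/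
noncomputable def stepFn {n : ℕ} (Q : Fin n → Fin n → ℝ) (x y : ℝ) : ℝ :=
  if hx : (⌊x * n⌋).toNat < n ∧ (⌊y * n⌋).toNat < n ∧ 0 ≤ x ∧ 0 ≤ y then
    Q ⟨(⌊x * n⌋).toNat, hx.1⟩ ⟨(⌊y * n⌋).toNat, hx.2.1⟩
  else 0

/-- The step graphon `w_g` of a finite simple graph on `[n]`. -/
noncomputable def stepGraphon {n : ℕ} (g : SimpleGraph (Fin n)) : ℝ → ℝ → ℝ :=
  stepFn (fun i j => if g.Adj i j then 1 else 0)

/-- The finset of all pair partitions of `Fin p`. -/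
noncomputable def pairPartitions (p : ℕ) : Finset (Finset (Finset (Fin p))) :=
  Finset.univ.filter IsPairPartition

/-- `Σ_{π ∈ P₂(p)} ρ(f_π, w)`, the `p`-th moment of the limit law `μ_w`. -/
noncomputable def momentFormula (p : ℕ) (w : ℝ → ℝ → ℝ) : ℝ :=
  ∑ P ∈ pairPartitions p, density (interGraph P) w

/-- `g`-independence (ε-independence) of a family of unital subalgebras with respect to a state
`τ`, following Młotkowski and Speicher–Wysoczański. -/
def GIndep {A : Type*} [Ring A] [Algebra ℂ A] (τ : A →ₗ[ℂ] ℂ) {ι : Type*}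
    (g : SimpleGraph ι) (B : ι → Subalgebra ℂ A) : Prop :=
  (∀ i j : ι, g.Adj i j →
      ∀ a ∈ B i, ∀ b ∈ B j, a * b = b * a ∧ τ (a * b) = τ a * τ b) ∧
  (∀ (k : ℕ) (idx : Fin k → ι),
      (∀ j₁ j₂ : Fin k, j₁ < j₂ → idx j₁ = idx j₂ →
        ∃ j₃, j₁ < j₃ ∧ j₃ < j₂ ∧ ¬ g.Adj (idx j₁) (idx j₃)) →
      ∀ a : Fin k → A, (∀ j, a j ∈ B (idx j)) → (∀ j, τ (a j) = 0) →
        τ (List.ofFn a).prod = 0)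

/-- The finset of graph homomorphisms from `f` to `g`. -/
noncomputable def homFinset {V W : Type*} [Fintype V] [Fintype W] (f : SimpleGraph V)
    (g : SimpleGraph W) : Finset (V → W) :=
  Finset.univ.filter fun φ => ∀ u v, f.Adj u v → g.Adj (φ u) (φ v)

/-- The finset of injective graph homomorphisms from `f` to `g`. -/
noncomputable def injHomFinset {V W : Type*} [Fintype V] [Fintype W] (f : SimpleGraph V)
    (g : SimpleGraph W) : Finset (V → W) :=
  Finset.univ.filter fun φ => Function.Injective φ ∧ ∀ u v, f.Adj u v → g.Adj (φ u) (φ v)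

/-- The number of graph homomorphisms `hom(f, g)`. -/
noncomputable def homCount {V W : Type*} [Fintype V] [Fintype W] (f : SimpleGraph V)
    (g : SimpleGraph W) : ℕ := (homFinset f g).card

/-- Weighted homomorphism density `ρ(f, (g, α))` of `f` in a node-weighted graph `(g, α)`. -/
noncomputable def wHomDensity {V W : Type*} [Fintype V] [Fintype W] (f : SimpleGraph V)
    (g : SimpleGraph W) (α : W → ℝ) : ℝ :=
  (∑ φ ∈ homFinset f g, ∏ v : V, α (φ v)) / (∑ v : W, α v) ^ (Fintype.card V)

/-- Weighted injective homomorphism density `ρ_inj(f, (g, α))`. -/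
noncomputable def wInjHomDensity {V W : Type*} [Fintype V] [Fintype W] (f : SimpleGraph V)
    (g : SimpleGraph W) (α : W → ℝ) : ℝ :=
  (∑ φ ∈ injHomFinset f g, ∏ v : V, α (φ v)) / (∑ v : W, α v) ^ (Fintype.card V)

/-! A component `c` of `f_π` that avoids a point `z` but has points on both sides of it contains
a block straddling `z`: otherwise every block of `c` lies on one side of `z`, and a block on the
left never crosses one on the right, so `c` would be disconnected. Blocks in different components
never cross, so a block `B` of `c₁` straddling a point of another component `c₂` traps the block
of that point strictly inside the span of `B`, and crossing drags every other block of `c₂` inside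
too. If `c₁` and `c₂` interleaved, each would be trapped strictly inside the span of a block of the
other, which is impossible. -/

theorem _root_.SimpleGraph.ConnectedComponent.induction_on_adj {V : Type*} {G : SimpleGraph V}
    {c : G.ConnectedComponent} {Q : V → Prop}
    (hstep : ∀ x y, G.connectedComponentMk x = c → G.Adj x y → Q x → Q y)
    {u v : V} (hu : G.connectedComponentMk u = c) (hv : G.connectedComponentMk v = c)
    (hQu : Q u) : Q v := by
  have huv := (SimpleGraph.reachable_iff_reflTransGen u v).1
    (SimpleGraph.ConnectedComponent.exact (hu.trans hv.symm))
  clear hv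
  induction huv with
  | refl => exact hQu
  | tail hux hxy ih =>
    refine hstep _ _ ?_ hxy ih
    rw [← hu]
    exact (SimpleGraph.ConnectedComponent.sound
      ((SimpleGraph.reachable_iff_reflTransGen _ _).2 hux)).symm

section Crossing

variable {p : ℕ}

open Finset

theorem not_crosses_of_forall_lt {X Y : Finset (Fin p)} (h : ∀ s ∈ X, ∀ t ∈ Y, s < t) :
    ¬ Crosses X Y := by
  rintro ⟨i, k, j, l, hik, hkj, hjl, ⟨-, hj, hk, -⟩ | ⟨hi, -, hk, -⟩⟩
  · exact lt_asymm hkj (h j hj k hk)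
  · exact lt_asymm hik (h k hk i hi)

theorem subset_Ioo_of_not_crosses {S W : Finset (Fin p)} {a b t : Fin p}
    (ha : a ∈ S) (hb : b ∈ S) (haW : a ∉ W) (hbW : b ∉ W) (hSW : ¬ Crosses S W)
    (ht : t ∈ W) (htab : t ∈ Ioo a b) : W ⊆ Ioo a b := by
  rw [mem_Ioo] at htab
  intro s hs
  rw [mem_Ioo]
  constructor
  · by_contra! hsa
    have hsa : s < a := lt_of_le_of_ne hsa (by rintro rfl; exact haW hs)
    exact hSW ⟨s, a, t, b, hsa, htab.1, htab.2, Or.inr ⟨hs, ht, ha, hb⟩⟩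
  · by_contra! hbs
    have hbs : b < s := lt_of_le_of_ne hbs (by rintro rfl; exact hbW hs)
    exact hSW ⟨a, t, b, s, htab.1, htab.2, hbs, Or.inl ⟨ha, hb, ht, hs⟩⟩

theorem exists_mem_Ioo_of_crosses {W W' : Finset (Fin p)} {a b : Fin p}
    (hc : Crosses W W') (hW : W ⊆ Ioo a b) : ∃ t ∈ W', t ∈ Ioo a b := by
  obtain ⟨i, k, j, l, hik, hkj, hjl, ⟨hi, hj, hk, -⟩ | ⟨-, hj, hk, hl⟩⟩ := hc
  · exact ⟨k, hk, mem_Ioo.2 ⟨(mem_Ioo.1 (hW hi)).1.trans hik, hkj.trans (mem_Ioo.1 (hW hj)).2⟩⟩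
  · exact ⟨j, hj, mem_Ioo.2 ⟨(mem_Ioo.1 (hW hk)).1.trans hkj, hjl.trans (mem_Ioo.1 (hW hl)).2⟩⟩

end Crossing

theorem IsPairPartition.isPartition {p : ℕ} {P : Finset (Finset (Fin p))}
    (hP : IsPairPartition P) : IsPartition P :=
  ⟨fun B hB => Finset.card_pos.1 (by rw [hP.1 B hB]; norm_num), hP.2⟩

theorem IsPartition.pairwiseDisjoint {p : ℕ} {P : Finset (Finset (Fin p))}
    (hP : IsPartition P) : (P : Set (Finset (Fin p))).PairwiseDisjoint id := by
  intro B hB B' hB' hne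
  refine Finset.disjoint_left.2 fun t ht ht' => hne ?_
  exact (hP.2 t).unique ⟨hB, ht⟩ ⟨hB', ht'⟩

section ComponentUnion

variable {p : ℕ} {P : Finset (Finset (Fin p))}

open Finset

noncomputable def componentUnion (P : Finset (Finset (Fin p)))
    (c : (interGraph P).ConnectedComponent) : Finset (Fin p) :=
  (univ.filter fun B : {B // B ∈ P} => (interGraph P).connectedComponentMk B = c).biUnion
    fun B => B.1

noncomputable def componentPartition (P : Finset (Finset (Fin p))) : Finset (Finset (Fin p)) :=
  univ.image (componentUnion P)

theorem mem_componentUnion {c : (interGraph P).ConnectedComponent} {t : Fin p} :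
    t ∈ componentUnion P c ↔
      ∃ B : {B // B ∈ P}, (interGraph P).connectedComponentMk B = c ∧ t ∈ B.1 := by
  simp only [componentUnion, mem_biUnion, mem_filter, mem_univ, true_and]

theorem not_crosses_of_connectedComponentMk_ne {X Y : {B // B ∈ P}}
    (h : (interGraph P).connectedComponentMk X ≠ (interGraph P).connectedComponentMk Y) :
    ¬ Crosses X.1 Y.1 := fun hXY =>
  h (SimpleGraph.ConnectedComponent.connectedComponentMk_eq_of_adj
    ⟨ne_of_apply_ne _ h, hXY⟩)

theorem disjoint_of_connectedComponentMk_ne (hP : (P : Set (Finset (Fin p))).PairwiseDisjoint id)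
    {X Y : {B // B ∈ P}}
    (h : (interGraph P).connectedComponentMk X ≠ (interGraph P).connectedComponentMk Y) :
    Disjoint X.1 Y.1 :=
  hP X.2 Y.2 (Subtype.coe_injective.ne (ne_of_apply_ne _ h))

theorem disjoint_componentUnion (hP : (P : Set (Finset (Fin p))).PairwiseDisjoint id)
    {c₁ c₂ : (interGraph P).ConnectedComponent} (h : c₁ ≠ c₂) :
    Disjoint (componentUnion P c₁) (componentUnion P c₂) := by
  refine disjoint_left.2 fun t ht₁ ht₂ => ?_
  obtain ⟨B₁, rfl, htB₁⟩ := mem_componentUnion.1 ht₁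
  obtain ⟨B₂, rfl, htB₂⟩ := mem_componentUnion.1 ht₂
  exact disjoint_left.1 (disjoint_of_connectedComponentMk_ne hP h) htB₁ htB₂

theorem exists_block_straddling {c : (interGraph P).ConnectedComponent} {x y z : Fin p}
    (hz : z ∉ componentUnion P c) (hx : x ∈ componentUnion P c) (hy : y ∈ componentUnion P c)
    (hxz : x < z) (hzy : z < y) :
    ∃ B : {B // B ∈ P}, (interGraph P).connectedComponentMk B = c ∧
      ∃ a ∈ B.1, ∃ b ∈ B.1, a < z ∧ z < b := by
  by_contra! hno
  have hz_ne : ∀ B : {B // B ∈ P}, (interGraph P).connectedComponentMk B = c →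
      ∀ t ∈ B.1, t ≠ z :=
    fun B hB t ht htz => hz (mem_componentUnion.2 ⟨B, hB, htz ▸ ht⟩)
  have hleft : ∀ B : {B // B ∈ P}, (interGraph P).connectedComponentMk B = c →
      ∀ a ∈ B.1, a < z → ∀ t ∈ B.1, t < z :=
    fun B hB a ha haz t ht => lt_of_le_of_ne (hno B hB a ha t ht haz) (hz_ne B hB t ht)
  have hright : ∀ B : {B // B ∈ P}, (interGraph P).connectedComponentMk B = c →
      ∀ b ∈ B.1, z < b → ∀ t ∈ B.1, z < t :=
    fun B hB b hb hzb t ht => lt_of_le_of_ne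
      (not_lt.1 fun htz => (hno B hB t ht b hb htz).not_gt hzb) (hz_ne B hB t ht).symm
  obtain ⟨Bx, hBx, hxB⟩ := mem_componentUnion.1 hx
  obtain ⟨By, hBy, hyB⟩ := mem_componentUnion.1 hy
  suffices hBy_left : ∀ t ∈ By.1, t < z from lt_asymm hzy (hBy_left y hyB)
  refine SimpleGraph.ConnectedComponent.induction_on_adj (Q := fun B => ∀ t ∈ B.1, t < z)
    (fun X Y hX hXY hX_left => ?_) hBx hBy (hleft Bx hBx x hxB hxz)
  have hY := (SimpleGraph.ConnectedComponent.connectedComponentMk_eq_of_adj hXY).symm.trans hX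
  by_contra! ⟨s, hs, hzs⟩
  have hY_right := hright Y hY s hs (lt_of_le_of_ne hzs (hz_ne Y hY s hs).symm)
  exact not_crosses_of_forall_lt (fun s hs t ht => (hX_left s hs).trans (hY_right t ht)) hXY.2

theorem componentUnion_subset_Ioo (hP : (P : Set (Finset (Fin p))).PairwiseDisjoint id)
    {B : {B // B ∈ P}} {a b : Fin p} (ha : a ∈ B.1) (hb : b ∈ B.1)
    {c : (interGraph P).ConnectedComponent} (hc : (interGraph P).connectedComponentMk B ≠ c)
    {t : Fin p} (ht : t ∈ componentUnion P c) (htab : t ∈ Ioo a b) :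
    componentUnion P c ⊆ Ioo a b := by
  have trapped : ∀ W : {B // B ∈ P}, (interGraph P).connectedComponentMk W = c →
      ∀ s ∈ W.1, s ∈ Ioo a b → W.1 ⊆ Ioo a b := by
    rintro W rfl s hs hsab
    have hdisj := disjoint_of_connectedComponentMk_ne hP hc
    exact subset_Ioo_of_not_crosses ha hb (disjoint_left.1 hdisj ha) (disjoint_left.1 hdisj hb)
      (not_crosses_of_connectedComponentMk_ne hc) hs hsab
  obtain ⟨W₀, hW₀, htW₀⟩ := mem_componentUnion.1 ht
  intro s hs
  obtain ⟨W, hW, hsW⟩ := mem_componentUnion.1 hs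
  refine SimpleGraph.ConnectedComponent.induction_on_adj (Q := fun W => W.1 ⊆ Ioo a b)
    (fun X Y hX hXY hX_in => ?_) hW₀ hW (trapped W₀ hW₀ t htW₀ htab) hsW
  obtain ⟨r, hrY, hrab⟩ := exists_mem_Ioo_of_crosses hXY.2 hX_in
  exact trapped Y
    ((SimpleGraph.ConnectedComponent.connectedComponentMk_eq_of_adj hXY).symm.trans hX) r hrY hrab

theorem not_interleaved_componentUnion (hP : (P : Set (Finset (Fin p))).PairwiseDisjoint id)
    {c₁ c₂ : (interGraph P).ConnectedComponent} (h : c₁ ≠ c₂) {i k j l : Fin p}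
    (hik : i < k) (hkj : k < j) (hjl : j < l)
    (hi : i ∈ componentUnion P c₁) (hj : j ∈ componentUnion P c₁)
    (hk : k ∈ componentUnion P c₂) (hl : l ∈ componentUnion P c₂) : False := by
  obtain ⟨B₁, rfl, a, ha, b, hb, hak, hkb⟩ :=
    exists_block_straddling (disjoint_left.1 (disjoint_componentUnion hP h.symm) hk) hi hj hik hkj
  obtain ⟨B₂, rfl, a', ha', b', hb', haj, hjb⟩ :=
    exists_block_straddling (disjoint_left.1 (disjoint_componentUnion hP h) hj) hk hl hkj hjl
  have haa' := componentUnion_subset_Ioo hP ha hb h hk (mem_Ioo.2 ⟨hak, hkb⟩)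
    (mem_componentUnion.2 ⟨B₂, rfl, ha'⟩)
  have ha'a := componentUnion_subset_Ioo hP ha' hb' h.symm hj (mem_Ioo.2 ⟨haj, hjb⟩)
    (mem_componentUnion.2 ⟨B₁, rfl, ha⟩)
  exact lt_asymm (mem_Ioo.1 haa').1 (mem_Ioo.1 ha'a).1

theorem isNoncrossing_componentPartition
    (hP : (P : Set (Finset (Fin p))).PairwiseDisjoint id) :
    IsNoncrossing (componentPartition P) := by
  rintro _ hS₁ _ hS₂ hne ⟨i, k, j, l, hik, hkj, hjl, ⟨hi, hj, hk, hl⟩ | ⟨hi, hj, hk, hl⟩⟩ <;>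
  obtain ⟨c₁, -, rfl⟩ := mem_image.1 hS₁ <;>
  obtain ⟨c₂, -, rfl⟩ := mem_image.1 hS₂
  · exact not_interleaved_componentUnion hP (ne_of_apply_ne _ hne) hik hkj hjl hi hj hk hl
  · exact not_interleaved_componentUnion hP (ne_of_apply_ne _ hne).symm hik hkj hjl hi hj hk hl

theorem IsPartition.componentPartition (hP : IsPartition P) :
    IsPartition (componentPartition P) := by
  refine ⟨?_, fun t => ?_⟩
  · intro S hS
    obtain ⟨c, -, rfl⟩ := mem_image.1 hS
    obtain ⟨B, rfl⟩ := c.exists_rep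
    obtain ⟨t, ht⟩ := hP.1 B.1 B.2
    exact ⟨t, mem_componentUnion.2 ⟨B, rfl, ht⟩⟩
  obtain ⟨B, ⟨hB, htB⟩, -⟩ := hP.2 t
  refine ⟨componentUnion P ((interGraph P).connectedComponentMk ⟨B, hB⟩),
    ⟨mem_image_of_mem _ (mem_univ _), mem_componentUnion.2 ⟨⟨B, hB⟩, rfl, htB⟩⟩, ?_⟩
  rintro _ ⟨hS, htS⟩
  obtain ⟨c, -, rfl⟩ := mem_image.1 hS
  obtain ⟨B', rfl, htB'⟩ := mem_componentUnion.1 htS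
  rw [show B' = ⟨B, hB⟩ from Subtype.ext ((hP.2 t).unique ⟨B'.2, htB'⟩ ⟨hB, htB⟩)]

end ComponentUnion

/-- The partition whose blocks are the unions of the blocks of `π` over the connected components
of the intersection graph `f_π` is a noncrossing partition of `[p]`. -/
theorem components_union_noncrossing
    {p : ℕ} (P : Finset (Finset (Fin p))) (hP : IsPairPartition P) :
    IsPartition
      ((Finset.univ : Finset (interGraph P).ConnectedComponent).image
        (fun c => (Finset.univ.filter
            (fun B : {B // B ∈ P} => (interGraph P).connectedComponentMk B = c)).biUnion
          (fun B => B.1))) ∧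
    IsNoncrossing
      ((Finset.univ : Finset (interGraph P).ConnectedComponent).image
        (fun c => (Finset.univ.filter
            (fun B : {B // B ∈ P} => (interGraph P).connectedComponentMk B = c)).biUnion
          (fun B => B.1))) :=
  ⟨hP.isPartition.componentPartition,
    isNoncrossing_componentPartition hP.isPartition.pairwiseDisjoint⟩

end EpsCLT
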